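/- (Prokhorov–Szynal lemma, region D₁) Let ω(z) = c₁z + c₂z² + c₃z³ + ⋯ be a Schwarz function on the unit disk D, and let μ, ν be real numbers with |μ| ≤ 1/2 and −1 ≤ ν ≤ 1. Then |c₃ + μ c₁c₂ + ν c₁³| ≤ 1. -/

import Mathlib

/-!
Iterating the Schur transform `f ↦ (f - f 0) / (z (1 - conj (f 0) f))`, which by the Schwarz
lemma maps holomorphic self-maps of the closed unit disk to such maps, gives Schur parameters
`a, b, d` in the closed disk with `c₁ = a`, `c₂ = (1 - |a|²) b` and
`c₃ = (1 - |a|²) ((1 - |b|²) d - ā b²)`. The triangle inequality then bounds the functional by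
a polynomial in `x = |a|`, `y = |b|`, and `1` minus that polynomial factors as
`(1 - x) ((x - y)² + x y ((3 - x) / 2 - x y))`, which is nonnegative on `[0, 1]²`.
-/

open Complex Metric Set Filter
open scoped ComplexConjugate Topology

lemma norm_sub_le_norm_one_sub_conj_mul {a w : ℂ} (ha : ‖a‖ ≤ 1) (hw : ‖w‖ ≤ 1) :
    ‖w - a‖ ≤ ‖1 - conj a * w‖ := by
  have key : normSq (1 - conj a * w) - normSq (w - a) = (1 - normSq a) * (1 - normSq w) := by
    simp only [normSq_apply, sub_re, sub_im, mul_re, mul_im, conj_re, conj_im, one_re, one_im]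
    ring
  have hprod : 0 ≤ (1 - normSq a) * (1 - normSq w) := by
    rw [normSq_eq_norm_sq, normSq_eq_norm_sq]
    exact mul_nonneg (by nlinarith [norm_nonneg a]) (by nlinarith [norm_nonneg w])
  rw [← sq_le_sq₀ (norm_nonneg _) (norm_nonneg _), ← normSq_eq_norm_sq, ← normSq_eq_norm_sq]
  linarith

lemma one_sub_conj_mul_ne_zero {a w : ℂ} (ha : ‖a‖ < 1) (hw : ‖w‖ ≤ 1) :
    1 - conj a * w ≠ 0 := by
  refine sub_ne_zero.2 fun h => ?_
  have : ‖conj a * w‖ < 1 := by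
    rw [norm_mul, RCLike.norm_conj]
    nlinarith [norm_nonneg a, norm_nonneg w]
  simp [← h] at this

theorem HasFPowerSeriesOnBall.of_hasSum_ofScalars {f : ℂ → ℂ} {c : ℕ → ℂ}
    (h : ∀ z ∈ ball (0 : ℂ) 1, HasSum (fun n => c n * z ^ n) (f z)) :
    HasFPowerSeriesOnBall f (.ofScalars ℂ c) 0 1 := by
  constructor
  · refine le_of_forall_lt_imp_le_of_dense fun r hr ↦ ?_
    lift r to NNReal using hr.ne_top
    apply FormalMultilinearSeries.le_radius_of_summable
    simpa [norm_mul] using (h r (by simpa using hr)).summable.norm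
  · simp
  · intro y hy
    rw [← ENNReal.coe_one, Metric.eball_coe, NNReal.coe_one] at hy
    simpa [mul_comm] using h y hy

theorem eqOn_dslope_zero_of_norm_eq_one {f : ℂ → ℂ} (hf : DifferentiableOn ℂ f (ball 0 1))
    (hf₁ : MapsTo f (ball 0 1) (closedBall 0 1)) (h : ‖f 0‖ = 1) :
    EqOn (dslope f 0) 0 (ball 0 1) := by
  have h0 : (0 : ℂ) ∈ ball (0 : ℂ) 1 := mem_ball_self one_pos
  have hconst : EqOn f (Function.const ℂ (f 0)) (ball 0 1) :=
    eqOn_of_isPreconnected_of_isMaxOn_norm (convex_ball _ _).isPreconnected isOpen_ball hf h0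
      fun z hz => by simpa [h] using hf₁ hz
  intro z hz
  rcases eq_or_ne z 0 with rfl | hz0
  · rw [dslope_same, (hconst.eventuallyEq_of_mem (isOpen_ball.mem_nhds h0)).deriv_eq]
    exact deriv_const _ _
  · simp [dslope_of_ne _ hz0, slope_def_field, hconst hz]

theorem dslope_sub_smul_of_differentiableAt {𝕜 E : Type*} [NontriviallyNormedField 𝕜]
    [NormedAddCommGroup E] [NormedSpace 𝕜 E] {f : 𝕜 → E} {a : 𝕜}
    (hf : DifferentiableAt 𝕜 f a) : dslope (fun x => (x - a) • f x) a = f := by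
  classical
  rw [dslope_sub_smul, Function.update_eq_self_iff,
    (((hasDerivAt_id' a).sub_const a).fun_smul hf.hasDerivAt).deriv]
  simp

/-- The Schur transform `(f z - f 0) / (z * (1 - conj (f 0) * f z))`, with its removable
singularity at `0` filled in by `dslope`. If `‖f 0‖ = 1` then `f` is constant on the disk and
the transform vanishes there (`0 / 0 = 0`). -/
noncomputable def schurTransform (f : ℂ → ℂ) (z : ℂ) : ℂ :=
  dslope f 0 z / (1 - conj (f 0) * f z)

section SchurTransform

variable {f : ℂ → ℂ}

lemma eqOn_schurTransform_zero_of_norm_eq_one (hf : DifferentiableOn ℂ f (ball 0 1))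
    (hf₁ : MapsTo f (ball 0 1) (closedBall 0 1)) (h : ‖f 0‖ = 1) :
    EqOn (schurTransform f) 0 (ball 0 1) := fun z hz => by
  simp [schurTransform, eqOn_dslope_zero_of_norm_eq_one hf hf₁ h hz]

lemma differentiableOn_schurTransform (hf : DifferentiableOn ℂ f (ball 0 1))
    (hf₁ : MapsTo f (ball 0 1) (closedBall 0 1)) :
    DifferentiableOn ℂ (schurTransform f) (ball 0 1) := by
  rcases (mem_closedBall_zero_iff.1 (hf₁ (mem_ball_self one_pos))).lt_or_eq with h | h
  · exact ((differentiableOn_dslope (isOpen_ball.mem_nhds (mem_ball_self one_pos))).2 hf).div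
      ((differentiableOn_const _).sub ((differentiableOn_const _).mul hf))
      fun z hz => one_sub_conj_mul_ne_zero h (mem_closedBall_zero_iff.1 (hf₁ hz))
  · exact (differentiableOn_const 0).congr (eqOn_schurTransform_zero_of_norm_eq_one hf hf₁ h)

lemma dslope_eq_mul_schurTransform (hf : DifferentiableOn ℂ f (ball 0 1))
    (hf₁ : MapsTo f (ball 0 1) (closedBall 0 1)) {z : ℂ} (hz : z ∈ ball 0 1) :
    dslope f 0 z = (1 - conj (f 0) * f z) * schurTransform f z := by
  rcases (mem_closedBall_zero_iff.1 (hf₁ (mem_ball_self one_pos))).lt_or_eq with h | h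
  · rw [schurTransform, mul_div_cancel₀ _
      (one_sub_conj_mul_ne_zero h (mem_closedBall_zero_iff.1 (hf₁ hz)))]
  · rw [eqOn_dslope_zero_of_norm_eq_one hf hf₁ h hz,
      eqOn_schurTransform_zero_of_norm_eq_one hf hf₁ h hz, Pi.zero_apply, mul_zero]

lemma mapsTo_schurTransform (hf : DifferentiableOn ℂ f (ball 0 1))
    (hf₁ : MapsTo f (ball 0 1) (closedBall 0 1)) :
    MapsTo (schurTransform f) (ball 0 1) (closedBall 0 1) := by
  have hψ := differentiableOn_schurTransform hf hf₁
  set g : ℂ → ℂ := fun z => (z - 0) • schurTransform f z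
  have hg₁ : MapsTo g (ball 0 1) (closedBall (g 0) 1) := fun z hz => by
    have hgz : g z = (f z - f 0) / (1 - conj (f 0) * f z) := by
      rw [← sub_smul_dslope f 0 z, smul_eq_mul, mul_div_assoc]; rfl
    rw [show g 0 = 0 by simp [g], mem_closedBall_zero_iff, hgz, norm_div]
    exact div_le_one_of_le₀ (norm_sub_le_norm_one_sub_conj_mul (mem_closedBall_zero_iff.1
      (hf₁ (mem_ball_self one_pos))) (mem_closedBall_zero_iff.1 (hf₁ hz))) (norm_nonneg _)
  intro z hz
  have hg : DifferentiableOn ℂ g (ball 0 1) := (differentiableOn_id.sub_const 0).smul hψ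
  have := norm_dslope_le_div_of_mapsTo_ball hg hg₁ hz
  rwa [dslope_sub_smul_of_differentiableAt
    (hψ.differentiableAt (isOpen_ball.mem_nhds (mem_ball_self one_pos))), div_one,
    ← mem_closedBall_zero_iff] at this

lemma deriv_eq_mul_schurTransform (hf : DifferentiableOn ℂ f (ball 0 1))
    (hf₁ : MapsTo f (ball 0 1) (closedBall 0 1)) :
    deriv f 0 = ((1 - ‖f 0‖ ^ 2 : ℝ) : ℂ) * schurTransform f 0 := by
  rw [← dslope_same, dslope_eq_mul_schurTransform hf hf₁ (mem_ball_self one_pos), conj_mul']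
  push_cast; ring

lemma deriv_dslope_eq_mul_schurTransform (hf : DifferentiableOn ℂ f (ball 0 1))
    (hf₁ : MapsTo f (ball 0 1) (closedBall 0 1)) :
    deriv (dslope f 0) 0 = ((1 - ‖f 0‖ ^ 2 : ℝ) : ℂ) *
      (deriv (schurTransform f) 0 - conj (f 0) * schurTransform f 0 ^ 2) := by
  have hnhds : ball (0 : ℂ) 1 ∈ 𝓝 0 := isOpen_ball.mem_nhds (mem_ball_self one_pos)
  have hfd := (hf.differentiableAt hnhds).hasDerivAt
  have hψd := ((differentiableOn_schurTransform hf hf₁).differentiableAt hnhds).hasDerivAt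
  have heq : dslope f 0 =ᶠ[𝓝 0] fun z => (1 - conj (f 0) * f z) * schurTransform f z :=
    eventually_of_mem hnhds fun z hz => dslope_eq_mul_schurTransform hf hf₁ hz
  rw [heq.deriv_eq, (((hfd.const_mul (conj (f 0))).const_sub 1).fun_mul hψd).deriv,
    deriv_eq_mul_schurTransform hf hf₁]
  push_cast
  linear_combination -deriv (schurTransform f) 0 * conj_mul' (f 0)

end SchurTransform

theorem exists_schur_parameters {ω : ℂ → ℂ} {c : ℕ → ℂ}
    (hω : DifferentiableOn ℂ ω (ball 0 1))
    (hωc : ∀ z ∈ ball (0 : ℂ) 1, HasSum (fun n => c n * z ^ n) (ω z))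
    (hc0 : c 0 = 0) (hωmap : MapsTo ω (ball 0 1) (ball 0 1)) :
    ∃ a b d : ℂ, ‖a‖ ≤ 1 ∧ ‖b‖ ≤ 1 ∧ ‖d‖ ≤ 1 ∧ c 1 = a ∧
      c 2 = ((1 - ‖a‖ ^ 2 : ℝ) : ℂ) * b ∧
      c 3 = ((1 - ‖a‖ ^ 2 : ℝ) : ℂ) * (((1 - ‖b‖ ^ 2 : ℝ) : ℂ) * d - conj a * b ^ 2) := by
  have h0 : (0 : ℂ) ∈ ball (0 : ℂ) 1 := mem_ball_self one_pos
  have hP := (HasFPowerSeriesOnBall.of_hasSum_ofScalars hωc).hasFPowerSeriesAt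
  have hP₁ := hP.has_fpower_series_dslope_fslope
  have hP₂ := hP₁.has_fpower_series_dslope_fslope
  set φ := dslope ω 0
  have hφ : DifferentiableOn ℂ φ (ball 0 1) :=
    (differentiableOn_dslope (isOpen_ball.mem_nhds h0)).2 hω
  have hω0 : ω 0 = 0 := by rw [← hP.coeff_zero ![]]; simp [hc0]
  have hφ₁ : MapsTo φ (ball 0 1) (closedBall 0 1) := fun z hz => by
    simpa using norm_dslope_le_div_of_mapsTo_ball hω
      (fun w hw => by rw [hω0]; exact ball_subset_closedBall (hωmap hw)) hz
  have hc1 : c 1 = φ 0 := by rw [show φ 0 = deriv ω 0 from dslope_same ω 0, hP.deriv]; simp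
  have hc2 : c 2 = deriv φ 0 := by rw [hP₁.deriv]; simp
  have hc3 : c 3 = deriv (dslope φ 0) 0 := by rw [hP₂.deriv]; simp
  set ψ := schurTransform φ
  have hψ := differentiableOn_schurTransform hφ hφ₁
  have hψ₁ := mapsTo_schurTransform hφ hφ₁
  refine ⟨φ 0, ψ 0, schurTransform ψ 0, mem_closedBall_zero_iff.1 (hφ₁ h0),
    mem_closedBall_zero_iff.1 (hψ₁ h0),
    mem_closedBall_zero_iff.1 (mapsTo_schurTransform hψ hψ₁ h0), hc1, ?_, ?_⟩
  · rw [hc2, deriv_eq_mul_schurTransform hφ hφ₁]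
  · rw [hc3, deriv_dslope_eq_mul_schurTransform hφ hφ₁, deriv_eq_mul_schurTransform hψ hψ₁]

lemma prokhorovSzynal_majorant_le_one {x y : ℝ} (hx₀ : 0 ≤ x) (hx₁ : x ≤ 1) (hy₀ : 0 ≤ y)
    (hy₁ : y ≤ 1) :
    (1 - x ^ 2) * (1 - y ^ 2 + x * y ^ 2) + x * (1 - x ^ 2) * y / 2 + x ^ 3 ≤ 1 := by
  have hq : 0 ≤ (x - y) ^ 2 + x * y * ((3 - x) / 2 - x * y) :=
    add_nonneg (sq_nonneg _) (mul_nonneg (mul_nonneg hx₀ hy₀) (by nlinarith))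
  nlinarith [mul_nonneg (sub_nonneg.2 hx₁) hq]

lemma norm_schur_parametrized_functional_le {a b d : ℂ} {μ ν : ℝ} (ha : ‖a‖ ≤ 1) (hb : ‖b‖ ≤ 1)
    (hd : ‖d‖ ≤ 1) (hμ : |μ| ≤ 1 / 2) (hν : |ν| ≤ 1) :
    ‖((1 - ‖a‖ ^ 2 : ℝ) : ℂ) * (((1 - ‖b‖ ^ 2 : ℝ) : ℂ) * d - conj a * b ^ 2) +
      (μ : ℂ) * a * (((1 - ‖a‖ ^ 2 : ℝ) : ℂ) * b) + (ν : ℂ) * a ^ 3‖ ≤ 1 := by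
  have hs : 0 ≤ 1 - ‖a‖ ^ 2 := by nlinarith [norm_nonneg a]
  have ht : 0 ≤ 1 - ‖b‖ ^ 2 := by nlinarith [norm_nonneg b]
  have hA : ‖((1 - ‖a‖ ^ 2 : ℝ) : ℂ) * (((1 - ‖b‖ ^ 2 : ℝ) : ℂ) * d - conj a * b ^ 2)‖ ≤
      (1 - ‖a‖ ^ 2) * (1 - ‖b‖ ^ 2 + ‖a‖ * ‖b‖ ^ 2) := by
    rw [norm_mul, norm_real, Real.norm_of_nonneg hs]
    gcongr
    calc _ ≤ ‖((1 - ‖b‖ ^ 2 : ℝ) : ℂ) * d‖ + ‖conj a * b ^ 2‖ := norm_sub_le _ _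
      _ ≤ _ := by
        rw [norm_mul, norm_mul, norm_real, Real.norm_of_nonneg ht, RCLike.norm_conj, norm_pow]
        gcongr
        nlinarith
  have hB : ‖(μ : ℂ) * a * (((1 - ‖a‖ ^ 2 : ℝ) : ℂ) * b)‖ ≤ ‖a‖ * (1 - ‖a‖ ^ 2) * ‖b‖ / 2 := by
    rw [norm_mul, norm_mul, norm_mul, norm_real, norm_real, Real.norm_of_nonneg hs,
      Real.norm_eq_abs]
    have := mul_nonneg (mul_nonneg (norm_nonneg a) hs) (norm_nonneg b)
    nlinarith
  have hC : ‖(ν : ℂ) * a ^ 3‖ ≤ ‖a‖ ^ 3 := by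
    rw [norm_mul, norm_pow, norm_real, Real.norm_eq_abs]
    exact mul_le_of_le_one_left (by positivity) hν
  calc _ ≤ _ := norm_add₃_le
    _ ≤ _ := add_le_add_three hA hB hC
    _ ≤ 1 := prokhorovSzynal_majorant_le_one (norm_nonneg a) ha (norm_nonneg b) hb

/-- Prokhorov–Szynal lemma, region `D₁`: for a Schwarz function with
coefficients `c` and real `μ`, `ν` with `|μ| ≤ 1/2` and `-1 ≤ ν ≤ 1`,
`|c₃ + μ c₁ c₂ + ν c₁³| ≤ 1`. -/
theorem prokhorov_szynal_D1
    (ω : ℂ → ℂ) (c : ℕ → ℂ)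
    (hω : DifferentiableOn ℂ ω (ball (0 : ℂ) 1))
    (hωc : ∀ z ∈ ball (0 : ℂ) 1, HasSum (fun n => c n * z ^ n) (ω z))
    (hc0 : c 0 = 0)
    (hωmap : ∀ z ∈ ball (0 : ℂ) 1, ω z ∈ ball (0 : ℂ) 1)
    (μ ν : ℝ) (hμ : |μ| ≤ 1 / 2) (hν₁ : -1 ≤ ν) (hν₂ : ν ≤ 1) :
    ‖c 3 + (μ : ℂ) * c 1 * c 2 + (ν : ℂ) * c 1 ^ 3‖ ≤ 1 := by
  obtain ⟨a, b, d, ha, hb, hd, h₁, h₂, h₃⟩ := exists_schur_parameters hω hωc hc0 hωmap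
  rw [h₁, h₂, h₃]
  exact norm_schur_parametrized_functional_le ha hb hd hμ (abs_le.2 ⟨hν₁, hν₂⟩)
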